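/- arXiv:1601.05111 — 4 statements merged into one kernel-verified Lean document; each statement's English description precedes it below -/
import Mathlib

section
/- Discrete Dubois–Reymond lemma: let a, b ∈ ℤ with a < b, and let f : {a, …, b−1} → ℝ. If ∑_{t=a}^{b−1} f(t)·(η(t+1) − η(t)) = 0 for every function η : {a, …, b} → ℝ with η(a) = η(b) = 0, then f is constant on {a, …, b−1}, i.e. there exists c ∈ ℝ with f(t) = c for all a ≤ t ≤ b−1. -/
/-!
Test the hypothesis against the indicator `η` of `(a, s]` for `a ≤ s < b`. It vanishes at
`a` and `b`, and its forward difference is `δ_a - δ_s`, so the sum collapses to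
`f a - f s = 0`; hence `f` equals `f a` on `[a, b)`.
-/

open Finset

theorem indicator_Ioc_add_one_sub {R : Type*} [AddGroupWithOne R] {a s : ℤ} (has : a ≤ s)
    (t : ℤ) :
    (Set.Ioc a s).indicator (1 : ℤ → R) (t + 1) - (Set.Ioc a s).indicator 1 t =
      (if t = a then 1 else 0) - (if t = s then 1 else 0) := by
  simp only [Set.indicator_apply, Set.mem_Ioc, Pi.one_apply]
  split_ifs <;> first | (exfalso; omega) | simp

theorem sum_mul_add_one_sub_indicator_Ioc {R : Type*} [Ring R] (f : ℤ → R) {a s b : ℤ}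
    (has : a ≤ s) (hsb : s < b) :
    ∑ t ∈ Ico a b, f t * ((Set.Ioc a s).indicator 1 (t + 1) - (Set.Ioc a s).indicator 1 t) =
      f a - f s := by
  simp only [indicator_Ioc_add_one_sub has, mul_sub, mul_ite, mul_one, mul_zero,
    sum_sub_distrib, sum_ite_eq']
  simp [has, hsb, has.trans_lt hsb]

theorem discrete_dubois_reymond_general (a b : ℤ) (f : ℤ → ℝ)
    (h : ∀ η : ℤ → ℝ, η a = 0 → η b = 0 →
      ∑ t ∈ Finset.Ico a b, f t * (η (t + 1) - η t) = 0) :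
    ∃ c : ℝ, ∀ t ∈ Finset.Ico a b, f t = c := by
  refine ⟨f a, fun s hs => ?_⟩
  obtain ⟨has, hsb⟩ := mem_Ico.1 hs
  have hsum := h ((Set.Ioc a s).indicator 1) (by simp) (by simp [hsb])
  rw [sum_mul_add_one_sub_indicator_Ioc f has hsb] at hsum
  exact (sub_eq_zero.1 hsum).symm

/-- Discrete Dubois–Reymond lemma on ℤ: if ∑_{t=a}^{b−1} f(t)·(η(t+1) − η(t)) = 0
for every η with η(a) = η(b) = 0, then f is constant on {a, …, b−1}. -/
theorem discrete_dubois_reymond (a b : ℤ) (hab : a < b) (f : ℤ → ℝ)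
    (h : ∀ η : ℤ → ℝ, η a = 0 → η b = 0 →
      ∑ t ∈ Finset.Ico a b, f t * (η (t + 1) - η t) = 0) :
    ∃ c : ℝ, ∀ t ∈ Finset.Ico a b, f t = c :=
  discrete_dubois_reymond_general a b f h
end

section
/- Define y : ℝ → ℝ by y(t) = −(3 + 2√3)t² + (4 + 2√3)t. Then y(0) = 0, y(1) = 1, and with F₁ = ∫₀¹ t·y'(t) dt and F₂ = ∫₀¹ (y'(t))² dt one has F₁/F₂ = (3 − 2√3)/12. -/
/-!
The extremal is a quadratic, so `y'` is affine and both `F₁` and `F₂` are integrals of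
polynomials over `[0, 1]`: `F₁ = -√3/3` and `F₂ = 8 + 4√3`. The value of the quotient then
reduces to a polynomial identity in `√3` modulo `√3 ^ 2 = 3`.
-/

open intervalIntegral

theorem hasDerivAt_quadratic (a b t : ℝ) :
    HasDerivAt (fun t : ℝ => a * t ^ 2 + b * t) (2 * a * t + b) t :=
  (((hasDerivAt_pow 2 t).const_mul a).add ((hasDerivAt_id t).const_mul b)).congr_deriv
    (by ring)

theorem integral_id_mul_affine (p q : ℝ) :
    ∫ t in (0:ℝ)..1, t * (p * t + q) = p / 3 + q / 2 := by
  have expand : ∀ t : ℝ, t * (p * t + q) = p * t ^ 2 + q * t := fun t => by ring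
  simp only [expand]
  rw [integral_add ((intervalIntegrable_pow 2).const_mul p) (intervalIntegrable_id.const_mul q),
    integral_const_mul, integral_const_mul, integral_pow, integral_id]
  ring

theorem integral_affine_sq (p q : ℝ) :
    ∫ t in (0:ℝ)..1, (p * t + q) ^ 2 = p ^ 2 / 3 + p * q + q ^ 2 := by
  have expand : ∀ t : ℝ, (p * t + q) ^ 2 = p ^ 2 * t ^ 2 + 2 * p * q * t + q ^ 2 :=
    fun t => by ring
  simp only [expand]
  rw [integral_add (((intervalIntegrable_pow 2).const_mul _).add
      (intervalIntegrable_id.const_mul _)) intervalIntegrable_const,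
    integral_add ((intervalIntegrable_pow 2).const_mul _) (intervalIntegrable_id.const_mul _),
    integral_const_mul, integral_const_mul, integral_pow, integral_id, integral_const,
    smul_eq_mul]
  ring

/-- For y(t) = −(3+2√3)t² + (4+2√3)t one has y(0) = 0, y(1) = 1 and
(∫₀¹ t y'(t) dt) / (∫₀¹ (y'(t))² dt) = (3 − 2√3)/12. -/
theorem extremal_quotient_value
    (y : ℝ → ℝ)
    (hy : ∀ t, y t = -(3 + 2 * Real.sqrt 3) * t ^ 2 + (4 + 2 * Real.sqrt 3) * t) :
    y 0 = 0 ∧ y 1 = 1 ∧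
    (∫ t in (0:ℝ)..1, t * deriv y t) / (∫ t in (0:ℝ)..1, (deriv y t) ^ 2)
      = (3 - 2 * Real.sqrt 3) / 12 := by
  set s := Real.sqrt 3
  have hs_sq : s ^ 2 = 3 := Real.sq_sqrt (by norm_num)
  have hs_pos : 0 < s := by positivity
  have hy' : deriv y = fun t => -2 * (3 + 2 * s) * t + (4 + 2 * s) := by
    ext t
    rw [funext hy, (hasDerivAt_quadratic _ _ t).deriv]
    ring
  refine ⟨by simp [hy], by rw [hy]; ring, ?_⟩
  rw [hy', integral_id_mul_affine, integral_affine_sq,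
    div_eq_div_iff (by nlinarith) (by norm_num)]
  linear_combination (8 / 3 * s + 4) * hs_sq
end

section
/- Discrete integral Euler–Lagrange equation: let a, b ∈ ℤ with a + 1 < b, let L : ℤ × ℝ × ℝ → ℝ be such that (y, v) ↦ L(t, y, v) is continuously differentiable for each t, and suppose ŷ : {a, …, b} → ℝ is a local minimizer (with respect to the sup norm) of 𝓛[y] = ∑_{t=a}^{b−1} L(t, y(t+1), Δy(t)) over all y : {a, …, b} → ℝ with y(a) = ŷ(a) and y(b) = ŷ(b), where Δy(t) = y(t+1) − y(t). Then there exists a constant c ∈ ℝ such that for all t ∈ {a, …, b−1}: L_v(t, ŷ(t+1), Δŷ(t)) = ∑_{τ=a}^{t−1} L_y(τ, ŷ(τ+1), Δŷ(τ)) + c, where L_y and L_v denote the partial derivatives of L with respect to its second and third arguments. -/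
/-!
Perturbing `yhat` by `ε` at one interior point `t + 1` changes only the terms `t` and `t + 1`
of the action, so the vanishing of the first variation at the local minimum gives the
difference equation `L_v(t + 1) = L_v(t) + L_y(t)`; summing it from `a` yields the integral
form with `c = L_v(a)`.
-/

open Finset Filter Topology

noncomputable def discreteAction (L : ℤ → ℝ → ℝ → ℝ) (a b : ℤ) (y : ℤ → ℝ) : ℝ :=
  ∑ t ∈ Ico a b, L t (y (t + 1)) (y (t + 1) - y t)

noncomputable def partialY (L : ℤ → ℝ → ℝ → ℝ) (y : ℤ → ℝ) (t : ℤ) : ℝ :=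
  deriv (fun u => L t u (y (t + 1) - y t)) (y (t + 1))

noncomputable def partialV (L : ℤ → ℝ → ℝ → ℝ) (y : ℤ → ℝ) (t : ℤ) : ℝ :=
  deriv (fun v => L t (y (t + 1)) v) (y (t + 1) - y t)

theorem fderiv_apply_eq_partial_derivs {f : ℝ × ℝ → ℝ} {y v : ℝ}
    (hf : DifferentiableAt ℝ f (y, v)) (p q : ℝ) :
    fderiv ℝ f (y, v) (p, q) =
      p * deriv (fun u => f (u, v)) y + q * deriv (fun w => f (y, w)) v := by
  have hfst : deriv (fun u => f (u, v)) y = fderiv ℝ f (y, v) (1, 0) :=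
    (hf.hasFDerivAt.comp_hasDerivAt y ((hasDerivAt_id y).prodMk (hasDerivAt_const y v))).deriv
  have hsnd : deriv (fun w => f (y, w)) v = fderiv ℝ f (y, v) (0, 1) :=
    (hf.hasFDerivAt.comp_hasDerivAt v ((hasDerivAt_const v y).prodMk (hasDerivAt_id v))).deriv
  have hpq : ((p, q) : ℝ × ℝ) = p • ((1 : ℝ), (0 : ℝ)) + q • ((0 : ℝ), (1 : ℝ)) := by simp
  rw [hfst, hsnd, hpq, map_add, map_smul, map_smul, smul_eq_mul, smul_eq_mul]

theorem hasDerivAt_discreteAction_add_smul {L : ℤ → ℝ → ℝ → ℝ} {a b : ℤ} {y : ℤ → ℝ}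
    (hL : ∀ t ∈ Ico a b,
      DifferentiableAt ℝ (fun p : ℝ × ℝ => L t p.1 p.2) (y (t + 1), y (t + 1) - y t))
    (η : ℤ → ℝ) :
    HasDerivAt (fun ε : ℝ => discreteAction L a b (y + ε • η))
      (∑ t ∈ Ico a b, (η (t + 1) * partialY L y t + (η (t + 1) - η t) * partialV L y t)) 0 := by
  unfold discreteAction
  refine HasDerivAt.fun_sum fun t ht => ?_
  have hpath : HasDerivAt
      (fun ε : ℝ => (y (t + 1) + ε * η (t + 1), y (t + 1) - y t + ε * (η (t + 1) - η t)))
      (η (t + 1), η (t + 1) - η t) 0 := by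
    refine HasDerivAt.prodMk ?_ ?_
    · simpa using ((hasDerivAt_id (0 : ℝ)).mul_const (η (t + 1))).const_add (y (t + 1))
    · simpa using ((hasDerivAt_id (0 : ℝ)).mul_const (η (t + 1) - η t)).const_add
        (y (t + 1) - y t)
  have := (hL t ht).hasFDerivAt.comp_hasDerivAt_of_eq 0 hpath (by simp)
  rw [fderiv_apply_eq_partial_derivs (hL t ht)] at this
  convert this using 1
  · ext ε
    simp only [Pi.add_apply, Pi.smul_apply, smul_eq_mul, Function.comp_apply]
    ring_nf
  · rfl

theorem isLocalMin_discreteAction_add_smul {L : ℤ → ℝ → ℝ → ℝ} {a b : ℤ} {yhat : ℤ → ℝ}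
    {δ : ℝ} (hδ : 0 < δ)
    (hmin : ∀ y : ℤ → ℝ, y a = yhat a → y b = yhat b →
      (∀ t ∈ Icc a b, |y t - yhat t| < δ) → discreteAction L a b yhat ≤ discreteAction L a b y)
    {η : ℤ → ℝ} (ha : η a = 0) (hb : η b = 0) :
    IsLocalMin (fun ε : ℝ => discreteAction L a b (yhat + ε • η)) 0 := by
  have hsmall : ∀ᶠ ε in 𝓝 (0 : ℝ), ∀ t ∈ Icc a b, |ε * η t| < δ := by
    rw [eventually_all_finset]
    intro t _
    have hcont : Continuous fun ε : ℝ => |ε * η t| := by fun_prop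
    exact (hcont.tendsto 0).eventually_lt_const (by simpa using hδ)
  filter_upwards [hsmall] with ε hε
  simpa using hmin (yhat + ε • η) (by simp [ha]) (by simp [hb]) (by simpa using hε)

theorem partialV_add_one_eq {L : ℤ → ℝ → ℝ → ℝ} {a b : ℤ} {yhat : ℤ → ℝ} {δ : ℝ} (hδ : 0 < δ)
    (hL : ∀ t ∈ Ico a b, DifferentiableAt ℝ (fun p : ℝ × ℝ => L t p.1 p.2)
      (yhat (t + 1), yhat (t + 1) - yhat t))
    (hmin : ∀ y : ℤ → ℝ, y a = yhat a → y b = yhat b →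
      (∀ t ∈ Icc a b, |y t - yhat t| < δ) → discreteAction L a b yhat ≤ discreteAction L a b y)
    {t : ℤ} (hat : a ≤ t) (htb : t + 1 < b) :
    partialV L yhat (t + 1) = partialV L yhat t + partialY L yhat t := by
  set η : ℤ → ℝ := Pi.single (t + 1) 1
  have hloc : IsLocalMin (fun ε : ℝ => discreteAction L a b (yhat + ε • η)) 0 :=
    isLocalMin_discreteAction_add_smul hδ hmin (Pi.single_eq_of_ne (by omega) _)
      (Pi.single_eq_of_ne (by omega) _)
  have hvar := hloc.hasDerivAt_eq_zero (hasDerivAt_discreteAction_add_smul hL η)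
  have hshift : ∑ r ∈ Ico a b, η (r + 1) * (partialY L yhat r + partialV L yhat r)
      = partialY L yhat t + partialV L yhat t := by
    rw [sum_eq_single_of_mem t (mem_Ico.mpr ⟨hat, by omega⟩)]
    · simp [η]
    · intro r _ hrt
      simp [η, Pi.single_eq_of_ne (show r + 1 ≠ t + 1 by omega)]
  have hdiag : ∑ r ∈ Ico a b, η r * partialV L yhat r = partialV L yhat (t + 1) := by
    rw [sum_eq_single_of_mem (t + 1) (mem_Ico.mpr ⟨by omega, htb⟩)]
    · simp [η]
    · intro r _ hrt
      simp [η, Pi.single_eq_of_ne hrt]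
  have hsplit : ∑ r ∈ Ico a b,
      (η (r + 1) * partialY L yhat r + (η (r + 1) - η r) * partialV L yhat r)
      = ∑ r ∈ Ico a b, η (r + 1) * (partialY L yhat r + partialV L yhat r)
        - ∑ r ∈ Ico a b, η r * partialV L yhat r := by
    rw [← sum_sub_distrib]
    exact sum_congr rfl fun r _ => by ring
  rw [hsplit, hshift, hdiag] at hvar
  linarith

theorem Int.eq_sum_Ico_add_of_add_one_eq {M : Type*} [AddCommMonoid M] {a b : ℤ} {f g : ℤ → M}
    (h : ∀ t, a ≤ t → t + 1 < b → f (t + 1) = f t + g t) :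
    ∀ t ∈ Ico a b, f t = ∑ τ ∈ Ico a t, g τ + f a := by
  intro t ht
  obtain ⟨hat, htb⟩ := mem_Ico.mp ht
  clear ht
  induction t, hat using Int.leInduction with
  | base => simp
  | succ t hat ih =>
    rw [h t hat htb, ih (by omega), ← sum_Ico_add_eq_sum_Ico_add_one hat]
    abel

theorem discrete_integral_euler_lagrange_general
    (a b : ℤ)
    (L : ℤ → ℝ → ℝ → ℝ)
    (hL : ∀ t : ℤ, ContDiff ℝ 1 (fun p : ℝ × ℝ => L t p.1 p.2))
    (yhat : ℤ → ℝ)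
    (hmin : ∃ δ > (0:ℝ), ∀ y : ℤ → ℝ, y a = yhat a → y b = yhat b →
      (∀ t ∈ Finset.Icc a b, |y t - yhat t| < δ) →
      ∑ t ∈ Finset.Ico a b, L t (yhat (t + 1)) (yhat (t + 1) - yhat t)
        ≤ ∑ t ∈ Finset.Ico a b, L t (y (t + 1)) (y (t + 1) - y t)) :
    ∃ c : ℝ, ∀ t ∈ Finset.Ico a b,
      deriv (fun v => L t (yhat (t + 1)) v) (yhat (t + 1) - yhat t)
        = (∑ τ ∈ Finset.Ico a t,
            deriv (fun u => L τ u (yhat (τ + 1) - yhat τ)) (yhat (τ + 1))) + c := by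
  obtain ⟨δ, hδ, hmin⟩ := hmin
  have hdiff : ∀ t ∈ Ico a b, DifferentiableAt ℝ (fun p : ℝ × ℝ => L t p.1 p.2)
      (yhat (t + 1), yhat (t + 1) - yhat t) :=
    fun t _ => ((hL t).differentiable one_ne_zero).differentiableAt
  exact ⟨partialV L yhat a, Int.eq_sum_Ico_add_of_add_one_eq
    fun t hat htb => partialV_add_one_eq hδ hdiff hmin hat htb⟩

/-- Discrete integral Euler–Lagrange equation on ℤ: if yhat is a local minimizer
(in sup norm) of 𝓛[y] = ∑_{t=a}^{b−1} L(t, y(t+1), Δy(t)) among functions with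
the same boundary values, then there is c ∈ ℝ with
L_v(t, yhat(t+1), Δyhat(t)) = ∑_{τ=a}^{t−1} L_y(τ, yhat(τ+1), Δyhat(τ)) + c for a ≤ t ≤ b−1. -/
theorem discrete_integral_euler_lagrange
    (a b : ℤ) (hab : a + 1 < b)
    (L : ℤ → ℝ → ℝ → ℝ)
    (hL : ∀ t : ℤ, ContDiff ℝ 1 (fun p : ℝ × ℝ => L t p.1 p.2))
    (yhat : ℤ → ℝ)
    (hmin : ∃ δ > (0:ℝ), ∀ y : ℤ → ℝ, y a = yhat a → y b = yhat b →
      (∀ t ∈ Finset.Icc a b, |y t - yhat t| < δ) →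
      ∑ t ∈ Finset.Ico a b, L t (yhat (t + 1)) (yhat (t + 1) - yhat t)
        ≤ ∑ t ∈ Finset.Ico a b, L t (y (t + 1)) (y (t + 1) - y t)) :
    ∃ c : ℝ, ∀ t ∈ Finset.Ico a b,
      deriv (fun v => L t (yhat (t + 1)) v) (yhat (t + 1) - yhat t)
        = (∑ τ ∈ Finset.Ico a t,
            deriv (fun u => L τ u (yhat (τ + 1) - yhat τ)) (yhat (τ + 1))) + c :=
  discrete_integral_euler_lagrange_general a b L hL yhat hmin
end

section
/- Euler–Lagrange equation for a quotient functional on ℝ: let f₁, f₂ : ℝ × ℝ × ℝ → ℝ be continuously differentiable, a < b, and suppose ŷ ∈ C¹([a,b]) is a local minimizer (in the C¹ norm) of 𝓛[y] = (∫_a^b f₁(t, y(t), y'(t)) dt)/(∫_a^b f₂(t, y(t), y'(t)) dt) subject to y(a) = ŷ(a), y(b) = ŷ(b), where F₂ := ∫_a^b f₂(t, ŷ(t), ŷ'(t)) dt ≠ 0. Set F₁ := ∫_a^b f₁(t, ŷ(t), ŷ'(t)) dt. Then there is a constant c such that for all t ∈ [a,b]: (1/F₂)·(f₁ᵥ(t,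 ŷ(t), ŷ'(t)) − ∫_a^t f₁ᵧ(τ, ŷ(τ), ŷ'(τ)) dτ) − (F₁/F₂²)·(f₂ᵥ(t, ŷ(t), ŷ'(t)) − ∫_a^t f₂ᵧ(τ, ŷ(τ), ŷ'(τ)) dτ) = c, where fᵧ, fᵥ denote partial derivatives with respect to the second and third arguments. -/
open Set intervalIntegral

/-!
For a C¹ variation `η` vanishing at `a` and `b`, `ε ↦ 𝓛[ŷ + εη]` has a local minimum at `0`, so
its derivative `(D₁ F₂ - F₁ D₂) / F₂²` vanishes, where `Dᵢ = ∫ (fᵢᵧ η + fᵢᵥ η')` is obtained by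
differentiating under the integral sign. Integrating `fᵢᵧ η` by parts turns `Dᵢ` into
`∫ (fᵢᵥ - ∫_a^t fᵢᵧ) η'`, so the function `G` of the theorem satisfies `∫ G η' = 0` for every
such `η`. By the du Bois-Reymond lemma (test with `η = ∫_a^t (G - c)`, `c` the mean of `G`),
`G` is constant.
-/

namespace EulerLagrangeQuotient

open MeasureTheory Filter Topology

lemma hasDerivAt_intervalIntegral_of_continuous {F F' : ℝ → ℝ → ℝ} {a b x₀ : ℝ}
    (hF : ∀ x, Continuous (F x)) (hF' : Continuous (Function.uncurry F'))
    (hderiv : ∀ x t, HasDerivAt (fun x => F x t) (F' x t) x) :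
    HasDerivAt (fun x => ∫ t in a..b, F x t) (∫ t in a..b, F' x₀ t) x₀ := by
  obtain ⟨C, hC⟩ := ((isCompact_closedBall x₀ 1).prod (isCompact_uIcc (a := a) (b := b)))
    |>.exists_bound_of_continuousOn hF'.continuousOn
  refine (hasDerivAt_integral_of_dominated_loc_of_deriv_le (bound := fun _ => C)
    (Metric.ball_mem_nhds x₀ one_pos) (.of_forall fun x => (hF x).aestronglyMeasurable)
    ((hF x₀).intervalIntegrable a b) (hF'.uncurry_left x₀).aestronglyMeasurable
    (.of_forall fun t ht x hx => hC (x, t) ⟨Metric.ball_subset_closedBall hx, uIoc_subset_uIcc ht⟩)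
    intervalIntegrable_const (.of_forall fun t _ x _ => hderiv x t)).2

lemma eqOn_zero_of_integral_eq_zero {g : ℝ → ℝ} {a b : ℝ} (hab : a < b) (hg : Continuous g)
    (hg0 : 0 ≤ g) (hint : ∫ t in a..b, g t = 0) : EqOn g 0 (Icc a b) := by
  have hae : g =ᵐ[volume.restrict (Ioc a b)] 0 :=
    (integral_eq_zero_iff_of_le_of_nonneg_ae hab.le (.of_forall hg0)
      (hg.intervalIntegrable a b)).mp hint
  rw [Measure.restrict_congr_set Ioc_ae_eq_Icc] at hae
  exact Measure.eqOn_Icc_of_ae_eq volume hab.ne hae hg.continuousOn continuousOn_const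

lemma hasDerivAt_primitive {g : ℝ → ℝ} (hg : Continuous g) (a t : ℝ) :
    HasDerivAt (fun t => ∫ τ in a..t, g τ) (g t) t :=
  integral_hasDerivAt_right (hg.intervalIntegrable a t) (hg.stronglyMeasurableAtFilter _ _)
    hg.continuousAt

lemma exists_eqOn_const_of_integral_mul_deriv_eq_zero {G : ℝ → ℝ} {a b : ℝ} (hab : a < b)
    (hG : Continuous G)
    (h : ∀ η : ℝ → ℝ, ContDiff ℝ 1 η → η a = 0 → η b = 0 → ∫ t in a..b, G t * deriv η t = 0) :
    ∃ c : ℝ, ∀ t ∈ Icc a b, G t = c := by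
  set c := (∫ t in a..b, G t) / (b - a) with hc
  have hGc : Continuous (fun t => G t - c) := hG.sub continuous_const
  set η : ℝ → ℝ := fun t => ∫ τ in a..t, (G τ - c)
  have hη' : deriv η = fun t => G t - c := funext fun t => (hasDerivAt_primitive hGc a t).deriv
  have hη : ContDiff ℝ 1 η := contDiff_one_iff_deriv.mpr
    ⟨fun t => (hasDerivAt_primitive hGc a t).differentiableAt, hη' ▸ hGc⟩
  have hmean : ∫ t in a..b, (G t - c) = 0 := by
    rw [integral_sub (hG.intervalIntegrable a b) intervalIntegrable_const,
      intervalIntegral.integral_const, smul_eq_mul, hc, mul_div_cancel₀ _ (sub_ne_zero.mpr hab.ne'),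
      sub_self]
  have hG_η := h η hη integral_same hmean
  rw [hη'] at hG_η
  have hsq : ∫ t in a..b, (G t - c) ^ 2 = 0 := by
    have hsplit : ∫ t in a..b, (G t - c) ^ 2
        = (∫ t in a..b, G t * (G t - c)) - c * ∫ t in a..b, (G t - c) := by
      rw [← intervalIntegral.integral_const_mul, ← integral_sub
        (Continuous.intervalIntegrable (by fun_prop) a b)
        (Continuous.intervalIntegrable (by fun_prop) a b)]
      exact integral_congr fun t _ => by ring
    rw [hsplit, hG_η, hmean, mul_zero, sub_zero]
  refine ⟨c, fun t ht => ?_⟩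
  have := eqOn_zero_of_integral_eq_zero hab (hGc.pow 2) (fun t => sq_nonneg _) hsq ht
  simpa [sub_eq_zero] using this

lemma integral_mul_add_mul_deriv_eq {P Q η : ℝ → ℝ} {a b : ℝ} (hP : Continuous P)
    (hQ : Continuous Q) (hη : ContDiff ℝ 1 η) (ha : η a = 0) (hb : η b = 0) :
    ∫ t in a..b, P t * η t + Q t * deriv η t
      = ∫ t in a..b, (Q t - ∫ τ in a..t, P τ) * deriv η t := by
  have hA : Continuous (fun t => ∫ τ in a..t, P τ) :=
    continuous_primitive (fun _ _ => hP.intervalIntegrable _ _) a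
  have hη₀ := hη.continuous
  have hη₁ := hη.continuous_deriv le_rfl
  have hboundary : ∫ t in a..b, P t * η t + (∫ τ in a..t, P τ) * deriv η t = 0 := by
    rw [integral_eq_sub_of_hasDerivAt
      (fun t _ => (hasDerivAt_primitive hP a t).mul (hη.differentiable one_ne_zero t).hasDerivAt)
      (Continuous.intervalIntegrable (by fun_prop) a b)]
    simp [ha, hb]
  rw [← sub_zero (∫ t in a..b, P t * η t + Q t * deriv η t), ← hboundary,
    ← integral_sub (Continuous.intervalIntegrable (by fun_prop) a b)
      (Continuous.intervalIntegrable (by fun_prop) a b)]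
  exact integral_congr fun t _ => by ring

lemma eventually_forall_abs_mul_lt {g : ℝ → ℝ} {K : Set ℝ} (hK : IsCompact K)
    (hg : ContinuousOn g K) {δ : ℝ} (hδ : 0 < δ) :
    ∀ᶠ ε in 𝓝 0, ∀ t ∈ K, |ε * g t| < δ := by
  obtain ⟨M, hM⟩ := hK.exists_bound_of_continuousOn hg
  have hlim : Tendsto (fun ε : ℝ => |ε| * M) (𝓝 0) (𝓝 0) :=
    (continuous_abs.mul continuous_const).tendsto' 0 0 (by simp)
  filter_upwards [hlim.eventually (gt_mem_nhds hδ)] with ε hε t ht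
  rw [abs_mul]
  exact (mul_le_mul_of_nonneg_left (hM t ht) (abs_nonneg ε)).trans_lt hε

lemma deriv_add_mul {y η : ℝ → ℝ} (hy : Differentiable ℝ y) (hη : Differentiable ℝ η)
    (ε t : ℝ) : deriv (fun t => y t + ε * η t) t = deriv y t + ε * deriv η t :=
  ((hy t).hasDerivAt.add ((hη t).hasDerivAt.const_mul ε)).deriv

noncomputable def pderiv₂ (f : ℝ → ℝ → ℝ → ℝ) (t u v : ℝ) : ℝ := deriv (fun u' => f t u' v) u

noncomputable def pderiv₃ (f : ℝ → ℝ → ℝ → ℝ) (t u v : ℝ) : ℝ := deriv (fun v' => f t u v') v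

variable {f : ℝ → ℝ → ℝ → ℝ}

lemma pderiv₂_eq_fderiv (hf : ContDiff ℝ 1 (fun p : ℝ × ℝ × ℝ => f p.1 p.2.1 p.2.2))
    (t u v : ℝ) :
    pderiv₂ f t u v = fderiv ℝ (fun p : ℝ × ℝ × ℝ => f p.1 p.2.1 p.2.2) (t, u, v) (0, 1, 0) :=
  ((hf.differentiable one_ne_zero _).hasFDerivAt.comp_hasDerivAt u ((hasDerivAt_const u t).prodMk
    ((hasDerivAt_id u).prodMk (hasDerivAt_const u v)))).deriv

lemma pderiv₃_eq_fderiv (hf : ContDiff ℝ 1 (fun p : ℝ × ℝ × ℝ => f p.1 p.2.1 p.2.2))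
    (t u v : ℝ) :
    pderiv₃ f t u v = fderiv ℝ (fun p : ℝ × ℝ × ℝ => f p.1 p.2.1 p.2.2) (t, u, v) (0, 0, 1) :=
  ((hf.differentiable one_ne_zero _).hasFDerivAt.comp_hasDerivAt v ((hasDerivAt_const v t).prodMk
    ((hasDerivAt_const v u).prodMk (hasDerivAt_id v)))).deriv

lemma continuous_pderiv₂ (hf : ContDiff ℝ 1 (fun p : ℝ × ℝ × ℝ => f p.1 p.2.1 p.2.2)) :
    Continuous (fun p : ℝ × ℝ × ℝ => pderiv₂ f p.1 p.2.1 p.2.2) := by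
  simp only [pderiv₂_eq_fderiv hf]
  exact (hf.continuous_fderiv one_ne_zero).clm_apply continuous_const

lemma continuous_pderiv₃ (hf : ContDiff ℝ 1 (fun p : ℝ × ℝ × ℝ => f p.1 p.2.1 p.2.2)) :
    Continuous (fun p : ℝ × ℝ × ℝ => pderiv₃ f p.1 p.2.1 p.2.2) := by
  simp only [pderiv₃_eq_fderiv hf]
  exact (hf.continuous_fderiv one_ne_zero).clm_apply continuous_const

lemma hasDerivAt_comp (hf : ContDiff ℝ 1 (fun p : ℝ × ℝ × ℝ => f p.1 p.2.1 p.2.2))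
    {t x u' v' : ℝ} {u v : ℝ → ℝ} (hu : HasDerivAt u u' x) (hv : HasDerivAt v v' x) :
    HasDerivAt (fun x => f t (u x) (v x))
      (pderiv₂ f t (u x) (v x) * u' + pderiv₃ f t (u x) (v x) * v') x := by
  have h := (hf.differentiable one_ne_zero (t, u x, v x)).hasFDerivAt.comp_hasDerivAt x
    ((hasDerivAt_const x t).prodMk (hu.prodMk hv))
  have hdir : ((0, u', v') : ℝ × ℝ × ℝ) = u' • (0, 1, 0) + v' • (0, 0, 1) := by simp
  rwa [hdir, map_add, map_smul, map_smul, ← pderiv₂_eq_fderiv hf, ← pderiv₃_eq_fderiv hf,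
    smul_eq_mul, smul_eq_mul, mul_comm u', mul_comm v'] at h

noncomputable def action (f : ℝ → ℝ → ℝ → ℝ) (a b : ℝ) (y : ℝ → ℝ) : ℝ :=
  ∫ t in a..b, f t (y t) (deriv y t)

def IsWeakLocalMin (Φ : (ℝ → ℝ) → ℝ) (a b : ℝ) (yhat : ℝ → ℝ) : Prop :=
  ∃ δ > (0 : ℝ), ∀ y : ℝ → ℝ, ContDiff ℝ 1 y → y a = yhat a → y b = yhat b →
    (∀ t ∈ Icc a b, |y t - yhat t| < δ ∧ |deriv y t - deriv yhat t| < δ) → Φ yhat ≤ Φ y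

noncomputable def eulerLagrangeIntegral (f : ℝ → ℝ → ℝ → ℝ) (a : ℝ) (y : ℝ → ℝ) (t : ℝ) : ℝ :=
  pderiv₃ f t (y t) (deriv y t) - ∫ τ in a..t, pderiv₂ f τ (y τ) (deriv y τ)

lemma continuous_jet {y : ℝ → ℝ} (hy : ContDiff ℝ 1 y) :
    Continuous (fun t : ℝ => ((t, y t, deriv y t) : ℝ × ℝ × ℝ)) :=
  continuous_id.prodMk (hy.continuous.prodMk (hy.continuous_deriv le_rfl))

lemma continuous_eulerLagrangeIntegral (hf : ContDiff ℝ 1 (fun p : ℝ × ℝ × ℝ => f p.1 p.2.1 p.2.2))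
    (a : ℝ) {y : ℝ → ℝ} (hy : ContDiff ℝ 1 y) : Continuous (eulerLagrangeIntegral f a y) :=
  ((continuous_pderiv₃ hf).comp (continuous_jet hy)).sub (continuous_primitive
    (fun _ _ => ((continuous_pderiv₂ hf).comp (continuous_jet hy)).intervalIntegrable _ _) a)

lemma hasDerivAt_action_add_mul (hf : ContDiff ℝ 1 (fun p : ℝ × ℝ × ℝ => f p.1 p.2.1 p.2.2))
    {a b : ℝ} {y η : ℝ → ℝ} (hy : ContDiff ℝ 1 y) (hη : ContDiff ℝ 1 η) (ha : η a = 0)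
    (hb : η b = 0) :
    HasDerivAt (fun ε => action f a b (fun t => y t + ε * η t))
      (∫ t in a..b, eulerLagrangeIntegral f a y t * deriv η t) 0 := by
  have hη₁ := hη.continuous_deriv le_rfl
  have hcurve : Continuous (fun q : ℝ × ℝ =>
      ((q.2, y q.2 + q.1 * η q.2, deriv y q.2 + q.1 * deriv η q.2) : ℝ × ℝ × ℝ)) := by
    have := hy.continuous; have := hη.continuous; have := hy.continuous_deriv le_rfl
    fun_prop
  have hvar := hasDerivAt_intervalIntegral_of_continuous (a := a) (b := b) (x₀ := 0)
    (F := fun ε t => f t (y t + ε * η t) (deriv y t + ε * deriv η t))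
    (F' := fun ε t => pderiv₂ f t (y t + ε * η t) (deriv y t + ε * deriv η t) * η t
      + pderiv₃ f t (y t + ε * η t) (deriv y t + ε * deriv η t) * deriv η t)
    (fun ε => hf.continuous.comp (hcurve.comp (Continuous.prodMk_right ε)))
    ((((continuous_pderiv₂ hf).comp hcurve).mul (hη.continuous.comp continuous_snd)).add
      (((continuous_pderiv₃ hf).comp hcurve).mul (hη₁.comp continuous_snd)))
    (fun ε t => hasDerivAt_comp hf ((hasDerivAt_mul_const (η t)).const_add (y t))
      ((hasDerivAt_mul_const (deriv η t)).const_add (deriv y t)))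
  simp only [zero_mul, add_zero] at hvar
  rw [integral_mul_add_mul_deriv_eq (P := fun t => pderiv₂ f t (y t) (deriv y t))
    (Q := fun t => pderiv₃ f t (y t) (deriv y t)) ((continuous_pderiv₂ hf).comp (continuous_jet hy))
    ((continuous_pderiv₃ hf).comp (continuous_jet hy)) hη ha hb] at hvar
  simp only [action, deriv_add_mul (hy.differentiable one_ne_zero) (hη.differentiable one_ne_zero)]
  exact hvar

lemma IsWeakLocalMin.isLocalMin_add_mul {Φ : (ℝ → ℝ) → ℝ} {a b : ℝ} {yhat η : ℝ → ℝ}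
    (hmin : IsWeakLocalMin Φ a b yhat) (hy : ContDiff ℝ 1 yhat) (hη : ContDiff ℝ 1 η)
    (ha : η a = 0) (hb : η b = 0) : IsLocalMin (fun ε => Φ (fun t => yhat t + ε * η t)) 0 := by
  obtain ⟨δ, hδ, hΦ⟩ := hmin
  filter_upwards [eventually_forall_abs_mul_lt isCompact_Icc hη.continuous.continuousOn hδ,
    eventually_forall_abs_mul_lt isCompact_Icc (hη.continuous_deriv le_rfl).continuousOn hδ]
    with ε hε₀ hε₁
  simp only [zero_mul, add_zero]
  refine hΦ _ (hy.add (contDiff_const.mul hη)) (by simp [ha]) (by simp [hb]) fun t ht => ?_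
  rw [deriv_add_mul (hy.differentiable one_ne_zero) (hη.differentiable one_ne_zero),
    add_sub_cancel_left, add_sub_cancel_left]
  exact ⟨hε₀ t ht, hε₁ t ht⟩

end EulerLagrangeQuotient

open EulerLagrangeQuotient in
/-- Euler–Lagrange equation for the quotient functional
𝓛[y] = (∫_a^b f₁(t,y,y') dt)/(∫_a^b f₂(t,y,y') dt) on ℝ: if yhat is a local
minimizer in the C¹ norm with fixed boundary values and F₂ ≠ 0, then
(1/F₂)(f₁ᵥ − ∫_a^t f₁ᵧ) − (F₁/F₂²)(f₂ᵥ − ∫_a^t f₂ᵧ) is constant on [a,b]. -/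
theorem euler_lagrange_quotient
    (a b : ℝ) (hab : a < b)
    (f₁ f₂ : ℝ → ℝ → ℝ → ℝ)
    (hf₁ : ContDiff ℝ 1 (fun p : ℝ × ℝ × ℝ => f₁ p.1 p.2.1 p.2.2))
    (hf₂ : ContDiff ℝ 1 (fun p : ℝ × ℝ × ℝ => f₂ p.1 p.2.1 p.2.2))
    (yhat : ℝ → ℝ) (hyhat : ContDiff ℝ 1 yhat)
    (F₁ F₂ : ℝ)
    (hF₁ : F₁ = ∫ t in a..b, f₁ t (yhat t) (deriv yhat t))
    (hF₂ : F₂ = ∫ t in a..b, f₂ t (yhat t) (deriv yhat t))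
    (hF₂0 : F₂ ≠ 0)
    (hmin : ∃ δ > (0:ℝ), ∀ y : ℝ → ℝ, ContDiff ℝ 1 y →
      y a = yhat a → y b = yhat b →
      (∀ t ∈ Icc a b, |y t - yhat t| < δ ∧ |deriv y t - deriv yhat t| < δ) →
      (∫ t in a..b, f₁ t (yhat t) (deriv yhat t))
          / (∫ t in a..b, f₂ t (yhat t) (deriv yhat t))
        ≤ (∫ t in a..b, f₁ t (y t) (deriv y t))
          / (∫ t in a..b, f₂ t (y t) (deriv y t))) :
    ∃ c : ℝ, ∀ t ∈ Icc a b,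
      (1 / F₂) * (deriv (fun v => f₁ t (yhat t) v) (deriv yhat t)
          - ∫ τ in a..t, deriv (fun u => f₁ τ u (deriv yhat τ)) (yhat τ))
      - (F₁ / F₂ ^ 2) * (deriv (fun v => f₂ t (yhat t) v) (deriv yhat t)
          - ∫ τ in a..t, deriv (fun u => f₂ τ u (deriv yhat τ)) (yhat τ)) = c := by
  have hmin' : IsWeakLocalMin (fun y => action f₁ a b y / action f₂ a b y) a b yhat := hmin
  have hEL₁ := continuous_eulerLagrangeIntegral hf₁ a hyhat
  have hEL₂ := continuous_eulerLagrangeIntegral hf₂ a hyhat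
  refine exists_eqOn_const_of_integral_mul_deriv_eq_zero (G := fun t =>
      (1 / F₂) * eulerLagrangeIntegral f₁ a yhat t
        - (F₁ / F₂ ^ 2) * eulerLagrangeIntegral f₂ a yhat t)
    hab (by fun_prop) fun η hη ha hb => ?_
  have hquot := (hasDerivAt_action_add_mul hf₁ hyhat hη ha hb).div
    (hasDerivAt_action_add_mul hf₂ hyhat hη ha hb) (by simpa [action, ← hF₂] using hF₂0)
  have hcrit := (hmin'.isLocalMin_add_mul hyhat hη ha hb).hasDerivAt_eq_zero hquot
  simp only [zero_mul, add_zero, action, ← hF₁, ← hF₂] at hcrit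
  have hη₁ := hη.continuous_deriv le_rfl
  rw [integral_congr (g := fun t => 1 / F₂ * (eulerLagrangeIntegral f₁ a yhat t * deriv η t)
      - F₁ / F₂ ^ 2 * (eulerLagrangeIntegral f₂ a yhat t * deriv η t)) fun t _ => by ring,
    integral_sub (Continuous.intervalIntegrable (by fun_prop) a b)
      (Continuous.intervalIntegrable (by fun_prop) a b),
    intervalIntegral.integral_const_mul, intervalIntegral.integral_const_mul]
  field_simp at hcrit ⊢
  linarith
end
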